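/- The function ψ₂(x,y) = (2x + 2y + 3x² + 10xy − 3y²)/Q(x,y), with Q as above, satisfies (−Δ + u)ψ₂ = 0 on ℝ², where u = −5120(1 + 8x + 2y + 17x² + 17y²)/Q². -/

import Mathlib

/-- Partial derivative in the first coordinate. -/
noncomputable def pdx (f : ℝ × ℝ → ℝ) : ℝ × ℝ → ℝ :=
  fun p => deriv (fun t => f (t, p.2)) p.1

/-- Partial derivative in the second coordinate. -/
noncomputable def pdy (f : ℝ × ℝ → ℝ) : ℝ × ℝ → ℝ :=
  fun p => deriv (fun t => f (p.1, t)) p.2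

/-- Laplacian on ℝ². -/
noncomputable def lap (f : ℝ × ℝ → ℝ) : ℝ × ℝ → ℝ :=
  fun p => pdx (pdx f) p + pdy (pdy f) p

/-- The denominator polynomial Q from Example 1. -/
noncomputable def Qpoly (p : ℝ × ℝ) : ℝ :=
  160 + 4 * p.1 ^ 2 + 4 * p.2 ^ 2 + 16 * p.1 ^ 3 + 4 * p.1 ^ 2 * p.2
    + 16 * p.1 * p.2 ^ 2 + 4 * p.2 ^ 3 + 17 * (p.1 ^ 2 + p.2 ^ 2) ^ 2

/-- The potential u from Example 1. -/
noncomputable def upot (p : ℝ × ℝ) : ℝ :=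
  -5120 * (1 + 8 * p.1 + 2 * p.2 + 17 * p.1 ^ 2 + 17 * p.2 ^ 2) / (Qpoly p) ^ 2

/-- The eigenfunction ψ₁ from Example 1. -/
noncomputable def psi1 (p : ℝ × ℝ) : ℝ :=
  (p.1 + 2 * p.1 ^ 2 + p.1 * p.2 - 2 * p.2 ^ 2) / Qpoly p

/-- The eigenfunction ψ₂ from Example 1. -/
noncomputable def psi2 (p : ℝ × ℝ) : ℝ :=
  (2 * p.1 + 2 * p.2 + 3 * p.1 ^ 2 + 10 * p.1 * p.2 - 3 * p.2 ^ 2) / Qpoly p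

/-! Along every horizontal or vertical line ψ₂ is a quotient of polynomials whose denominator
never vanishes, since `17 Q = 2720 + (x² + y²)((17x + 8)² + (17y + 2)²)`. The quotient rule
applied twice therefore expresses `Δψ₂` as a polynomial over `Q³`, and the equation
`Δψ₂ = u ψ₂` becomes a polynomial identity. -/

open Polynomial

theorem deriv_deriv_div {n n' n'' q q' q'' : ℝ → ℝ}
    (hn : ∀ t, HasDerivAt n (n' t) t) (hn' : ∀ t, HasDerivAt n' (n'' t) t)
    (hq : ∀ t, HasDerivAt q (q' t) t) (hq' : ∀ t, HasDerivAt q' (q'' t) t)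
    (hq0 : ∀ t, q t ≠ 0) (x : ℝ) :
    deriv (deriv fun t => n t / q t) x =
      (n'' x * q x ^ 2 - 2 * n' x * q x * q' x - n x * q x * q'' x + 2 * n x * q' x ^ 2)
        / q x ^ 3 := by
  have hderiv : deriv (fun t => n t / q t) = fun t => (n' t * q t - n t * q' t) / q t ^ 2 :=
    funext fun t => ((hn t).div (hq t) (hq0 t)).deriv
  have hsecond := (((hn' x).fun_mul (hq x)).fun_sub ((hn x).fun_mul (hq' x))).fun_div
    ((hq x).fun_pow 2) (pow_ne_zero 2 (hq0 x))
  rw [hderiv, hsecond.deriv]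
  field_simp [hq0 x]
  ring

theorem Polynomial.deriv_deriv_eval_div (P R : ℝ[X]) (hR : ∀ t, R.eval t ≠ 0) (x : ℝ) :
    deriv (deriv fun t => P.eval t / R.eval t) x =
      ((derivative (derivative P)).eval x * R.eval x ^ 2
        - 2 * (derivative P).eval x * R.eval x * (derivative R).eval x
        - P.eval x * R.eval x * (derivative (derivative R)).eval x
        + 2 * P.eval x * (derivative R).eval x ^ 2) / R.eval x ^ 3 :=
  deriv_deriv_div P.hasDerivAt (derivative P).hasDerivAt R.hasDerivAt
    (derivative R).hasDerivAt hR x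

theorem pdx_pdx_apply (f : ℝ × ℝ → ℝ) (p : ℝ × ℝ) :
    pdx (pdx f) p = deriv (deriv fun t => f (t, p.2)) p.1 := rfl

theorem pdy_pdy_apply (f : ℝ × ℝ → ℝ) (p : ℝ × ℝ) :
    pdy (pdy f) p = deriv (deriv fun t => f (p.1, t)) p.2 := rfl

theorem Qpoly_pos (p : ℝ × ℝ) : 0 < Qpoly p := by
  have h : Qpoly p =
      160 + (p.1 ^ 2 + p.2 ^ 2) * ((17 * p.1 + 8) ^ 2 + (17 * p.2 + 2) ^ 2) / 17 := by
    rw [Qpoly]; ring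
  rw [h]
  positivity

noncomputable def QpolyX (y : ℝ) : ℝ[X] :=
  C 17 * X ^ 4 + C 16 * X ^ 3 + C (4 + 4 * y + 34 * y ^ 2) * X ^ 2 + C (16 * y ^ 2) * X
    + C (160 + 4 * y ^ 2 + 4 * y ^ 3 + 17 * y ^ 4)

noncomputable def QpolyY (x : ℝ) : ℝ[X] :=
  C 17 * X ^ 4 + C 4 * X ^ 3 + C (4 + 16 * x + 34 * x ^ 2) * X ^ 2 + C (4 * x ^ 2) * X
    + C (160 + 4 * x ^ 2 + 16 * x ^ 3 + 17 * x ^ 4)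

noncomputable def psi2NumX (y : ℝ) : ℝ[X] :=
  C 3 * X ^ 2 + C (2 + 10 * y) * X + C (2 * y - 3 * y ^ 2)

noncomputable def psi2NumY (x : ℝ) : ℝ[X] :=
  C (-3) * X ^ 2 + C (2 + 10 * x) * X + C (2 * x + 3 * x ^ 2)

theorem eval_QpolyX (x y : ℝ) : (QpolyX y).eval x = Qpoly (x, y) := by
  simp only [QpolyX, Qpoly, eval_add, eval_mul, eval_C, eval_pow, eval_X]
  ring

theorem eval_QpolyY (x y : ℝ) : (QpolyY x).eval y = Qpoly (x, y) := by
  simp only [QpolyY, Qpoly, eval_add, eval_mul, eval_C, eval_pow, eval_X]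
  ring

theorem eval_QpolyX_ne_zero (x y : ℝ) : (QpolyX y).eval x ≠ 0 :=
  eval_QpolyX x y ▸ (Qpoly_pos (x, y)).ne'

theorem eval_QpolyY_ne_zero (x y : ℝ) : (QpolyY x).eval y ≠ 0 :=
  eval_QpolyY x y ▸ (Qpoly_pos (x, y)).ne'

theorem psi2_slice_x_eq_div (y : ℝ) :
    (fun t => psi2 (t, y)) = fun t => (psi2NumX y).eval t / (QpolyX y).eval t := by
  ext t
  simp only [psi2, eval_QpolyX, psi2NumX, eval_add, eval_mul, eval_C, eval_pow, eval_X]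
  ring

theorem psi2_slice_y_eq_div (x : ℝ) :
    (fun t => psi2 (x, t)) = fun t => (psi2NumY x).eval t / (QpolyY x).eval t := by
  ext t
  simp only [psi2, eval_QpolyY, psi2NumY, eval_add, eval_mul, eval_C, eval_pow, eval_X]
  ring

theorem psi2_in_kernel :
    ∀ p : ℝ × ℝ, -lap psi2 p + upot p * psi2 p = 0 := by
  rintro ⟨x, y⟩
  rw [lap, pdx_pdx_apply, pdy_pdy_apply, psi2_slice_x_eq_div, psi2_slice_y_eq_div,
    deriv_deriv_eval_div _ _ (eval_QpolyX_ne_zero · y),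
    deriv_deriv_eval_div _ _ (eval_QpolyY_ne_zero x ·), eval_QpolyX, eval_QpolyY]
  simp only [psi2NumX, psi2NumY, QpolyX, QpolyY, derivative_add, derivative_C_mul_X_pow,
    derivative_C_mul_X, derivative_C, derivative_zero, eval_add, eval_C_mul, eval_X_pow, eval_C,
    eval_X, eval_zero, Nat.cast_ofNat]
  have hQ := (Qpoly_pos (x, y)).ne'
  rw [upot, psi2]
  field_simp
  rw [Qpoly]
  ring
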